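/- Let P and Q be probability measures on a measurable space and A a measurable event. Then P(A) + Q(Aᶜ) ≥ (1/2)·exp(−KL(P, Q)), where KL(P,Q) denotes the Kullback–Leibler divergence of P with respect to Q. -/

import Mathlib

open MeasureTheory Real
open scoped ENNReal

/-- The Kullback–Leibler divergence of `P` with respect to `Q`, valued in `EReal`:
`∫ log(dP/dQ) dP` when `P ≪ Q` and the log-likelihood ratio is integrable,
and `+∞` otherwise. -/
noncomputable def klDiv {α : Type*} [MeasurableSpace α] (P Q : Measure α) : EReal :=
  open Classical in
  if P ≪ Q ∧ Integrable (llr P Q) P then ((∫ x, llr P Q x ∂P : ℝ) : EReal) else ⊤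

/-!
With `p = dP/dQ`, the Hellinger affinity `H = ∫ √p dQ` sits between both sides. Writing
`√p = √(min p 1) · √(max p 1)`, Cauchy–Schwarz gives `H² ≤ ∫ min p 1 dQ · ∫ max p 1 dQ`,
where the first factor is at most `P A + Q Aᶜ` and the second at most `2`. On the other hand
`H = ∫ exp(-llr/2) dP`, so Jensen's inequality for `exp` gives `exp(-KL/2) ≤ H`.
-/

namespace MeasureTheory

variable {α : Type*} [MeasurableSpace α]

/-- The affinity `∫ √(p q) dμ` of densities `p, q`, written without a dominating measure: the
singular part of `P` with respect to `Q` contributes nothing to it. -/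
noncomputable def hellingerAffinity (P Q : Measure α) : ℝ≥0∞ :=
  ∫⁻ x, P.rnDeriv Q x ^ (1 / 2 : ℝ) ∂Q

theorem _root_.ENNReal.sq_lintegral_sqrt_mul_le {μ : Measure α} {f g : α → ℝ≥0∞}
    (hf : AEMeasurable f μ) (hg : AEMeasurable g μ) :
    (∫⁻ x, (f x * g x) ^ (1 / 2 : ℝ) ∂μ) ^ 2 ≤ (∫⁻ x, f x ∂μ) * ∫⁻ x, g x ∂μ := by
  have hCS := ENNReal.lintegral_mul_le_Lp_mul_Lq μ (p := 2) (q := 2) (by constructor <;> norm_num)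
    (hf.pow_const (1 / 2 : ℝ)) (hg.pow_const (1 / 2 : ℝ))
  simp only [Pi.mul_apply, ← ENNReal.rpow_mul] at hCS
  norm_num at hCS
  calc (∫⁻ x, (f x * g x) ^ (1 / 2 : ℝ) ∂μ) ^ 2
      ≤ ((∫⁻ x, f x ∂μ) ^ (1 / 2 : ℝ) * (∫⁻ x, g x ∂μ) ^ (1 / 2 : ℝ)) ^ 2 := by
        simp only [ENNReal.mul_rpow_of_nonneg _ _ (by norm_num : (0 : ℝ) ≤ 1 / 2)]
        gcongr
    _ = (∫⁻ x, f x ∂μ) * ∫⁻ x, g x ∂μ := by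
        rw [mul_pow, ← ENNReal.rpow_natCast, ← ENNReal.rpow_natCast, ← ENNReal.rpow_mul,
          ← ENNReal.rpow_mul]
        norm_num

theorem lintegral_min_rnDeriv_one_le (P Q : Measure α) {A : Set α} (hA : MeasurableSet A) :
    ∫⁻ x, min (P.rnDeriv Q x) 1 ∂Q ≤ P A + Q Aᶜ := by
  rw [← lintegral_add_compl _ hA]
  gcongr
  · calc ∫⁻ x in A, min (P.rnDeriv Q x) 1 ∂Q ≤ ∫⁻ x in A, P.rnDeriv Q x ∂Q :=
          lintegral_mono fun _ ↦ min_le_left _ _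
      _ ≤ P A := Measure.setLIntegral_rnDeriv_le A
  · calc ∫⁻ x in Aᶜ, min (P.rnDeriv Q x) 1 ∂Q ≤ ∫⁻ _ in Aᶜ, 1 ∂Q :=
          lintegral_mono fun _ ↦ min_le_right _ _
      _ = Q Aᶜ := by simp

theorem lintegral_max_rnDeriv_one_le (P Q : Measure α) :
    ∫⁻ x, max (P.rnDeriv Q x) 1 ∂Q ≤ P Set.univ + Q Set.univ :=
  calc ∫⁻ x, max (P.rnDeriv Q x) 1 ∂Q ≤ ∫⁻ x, (P.rnDeriv Q x + 1) ∂Q :=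
        lintegral_mono fun _ ↦ max_le le_self_add le_add_self
    _ = ∫⁻ x, P.rnDeriv Q x ∂Q + Q Set.univ := by
        rw [lintegral_add_right _ measurable_const, lintegral_one]
    _ ≤ P Set.univ + Q Set.univ := by gcongr; exact Measure.lintegral_rnDeriv_le

theorem hellingerAffinity_sq_le (P Q : Measure α) {A : Set α} (hA : MeasurableSet A) :
    hellingerAffinity P Q ^ 2 ≤ (P A + Q Aᶜ) * (P Set.univ + Q Set.univ) := by
  have hp := Measure.measurable_rnDeriv P Q
  calc hellingerAffinity P Q ^ 2
      = (∫⁻ x, (min (P.rnDeriv Q x) 1 * max (P.rnDeriv Q x) 1) ^ (1 / 2 : ℝ) ∂Q) ^ 2 := by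
        simp only [min_mul_max, mul_one, hellingerAffinity]
    _ ≤ (∫⁻ x, min (P.rnDeriv Q x) 1 ∂Q) * ∫⁻ x, max (P.rnDeriv Q x) 1 ∂Q :=
        ENNReal.sq_lintegral_sqrt_mul_le (hp.min measurable_const).aemeasurable
          (hp.max measurable_const).aemeasurable
    _ ≤ (P A + Q Aᶜ) * (P Set.univ + Q Set.univ) := by
        gcongr
        exacts [lintegral_min_rnDeriv_one_le P Q hA, lintegral_max_rnDeriv_one_le P Q]

theorem _root_.Real.mul_exp_neg_log_div_two {a : ℝ} (ha : 0 ≤ a) :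
    a * exp (-log a / 2) = √a := by
  rcases ha.eq_or_lt with rfl | ha
  · simp
  rw [neg_div, ← log_sqrt ha.le, exp_neg, exp_log (sqrt_pos.2 ha), ← div_eq_mul_inv, div_sqrt]

theorem toReal_rnDeriv_mul_exp_neg_llr_div_two {P Q : Measure α} (x : α) :
    (P.rnDeriv Q x).toReal * exp (-llr P Q x / 2) = √(P.rnDeriv Q x).toReal :=
  Real.mul_exp_neg_log_div_two ENNReal.toReal_nonneg

theorem integral_sqrt_toReal_rnDeriv (P Q : Measure α) [SigmaFinite P] :
    ∫ x, √(P.rnDeriv Q x).toReal ∂Q = (hellingerAffinity P Q).toReal := by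
  simp only [sqrt_eq_rpow, ENNReal.toReal_rpow, hellingerAffinity]
  exact integral_toReal ((Measure.measurable_rnDeriv P Q).pow_const _).aemeasurable
    ((Measure.rnDeriv_lt_top P Q).mono fun _ hx ↦
      ENNReal.rpow_lt_top_of_nonneg (by norm_num) hx.ne)

theorem integral_exp_neg_llr_div_two {P Q : Measure α} [SigmaFinite P] [SigmaFinite Q]
    (hPQ : P ≪ Q) :
    ∫ x, exp (-llr P Q x / 2) ∂P = (hellingerAffinity P Q).toReal := by
  rw [← integral_toReal_rnDeriv_mul hPQ]
  simpa only [toReal_rnDeriv_mul_exp_neg_llr_div_two] using integral_sqrt_toReal_rnDeriv P Q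

section Finite

variable (P Q : Measure α) [IsFiniteMeasure P] [IsFiniteMeasure Q]

theorem integrable_sqrt_toReal_rnDeriv : Integrable (fun x ↦ √(P.rnDeriv Q x).toReal) Q := by
  have hdom : Integrable (fun x ↦ 1 + (P.rnDeriv Q x).toReal) Q :=
    (integrable_const 1).add Measure.integrable_toReal_rnDeriv
  refine hdom.mono' (Measure.measurable_rnDeriv P Q).ennreal_toReal.sqrt.aestronglyMeasurable
    (.of_forall fun x ↦ ?_)
  rw [Real.norm_of_nonneg (sqrt_nonneg _)]
  set p := (P.rnDeriv Q x).toReal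
  nlinarith [sq_sqrt (ENNReal.toReal_nonneg : 0 ≤ p), sq_nonneg (√p - 1)]

variable {P Q}

theorem integrable_exp_neg_llr_div_two (hPQ : P ≪ Q) :
    Integrable (fun x ↦ exp (-llr P Q x / 2)) P := by
  rw [← integrable_toReal_rnDeriv_mul_iff hPQ]
  simpa only [toReal_rnDeriv_mul_exp_neg_llr_div_two] using integrable_sqrt_toReal_rnDeriv P Q

end Finite

section Probability

variable {P Q : Measure α} [IsProbabilityMeasure P] [IsFiniteMeasure Q]

theorem exp_neg_integral_llr_div_two_le (hPQ : P ≪ Q)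
    (hint : Integrable (llr P Q) P) :
    exp (-(∫ x, llr P Q x ∂P) / 2) ≤ (hellingerAffinity P Q).toReal := by
  have hJensen := convexOn_exp.map_integral_le continuous_exp.continuousOn isClosed_univ
    (.of_forall fun _ ↦ Set.mem_univ _) (hint.neg.div_const 2)
    (integrable_exp_neg_llr_div_two hPQ)
  simp only [Pi.neg_apply] at hJensen
  rwa [integral_div, integral_neg, integral_exp_neg_llr_div_two hPQ] at hJensen

theorem ofReal_exp_neg_integral_llr_le_hellingerAffinity_sq (hPQ : P ≪ Q)
    (hint : Integrable (llr P Q) P) :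
    ENNReal.ofReal (exp (-∫ x, llr P Q x ∂P)) ≤ hellingerAffinity P Q ^ 2 := by
  have hhalf : exp (-∫ x, llr P Q x ∂P) = exp (-(∫ x, llr P Q x ∂P) / 2) ^ 2 := by
    rw [← exp_nat_mul]; ring_nf
  rw [hhalf, ENNReal.ofReal_pow (exp_nonneg _)]
  gcongr
  exact ENNReal.ofReal_le_of_le_toReal (exp_neg_integral_llr_div_two_le hPQ hint)

end Probability

end MeasureTheory

/-- Bretagnolle–Huber inequality: for probability measures `P, Q` and a measurable
event `A`, `P(A) + Q(Aᶜ) ≥ (1/2) exp(-KL(P, Q))`. -/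
theorem bretagnolle_huber {α : Type*} [MeasurableSpace α] (P Q : Measure α)
    [IsProbabilityMeasure P] [IsProbabilityMeasure Q] {A : Set α}
    (hA : MeasurableSet A) :
    2⁻¹ * EReal.exp (-(klDiv P Q)) ≤ P A + Q Aᶜ := by
  rw [klDiv]
  split_ifs with hKL
  · obtain ⟨hPQ, hint⟩ := hKL
    have hH := hellingerAffinity_sq_le P Q hA
    rw [measure_univ, measure_univ, one_add_one_eq_two] at hH
    rw [← EReal.coe_neg, EReal.exp_coe, ENNReal.inv_mul_le_iff two_ne_zero ENNReal.ofNat_ne_top,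
      mul_comm]
    exact (ofReal_exp_neg_integral_llr_le_hellingerAffinity_sq hPQ hint).trans hH
  · simp
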